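/- arXiv:1210.1116 — 2 statements merged into one kernel-verified Lean document; each statement's English description precedes it below -/
import Mathlib

section
/- If (A_i)_{i=1,...,n} and (B_i)_{i=1,...,n} are stochastic matrices on E_k = {0,...,k} such that A_i ⊴ B_i for every i = 1,...,n, then the ordered products satisfy A_1 A_2 ⋯ A_n ⊴ B_1 B_2 ⋯ B_n. -/
open Finset Matrix

/-- Usual stochastic order between two vectors on `Fin m`. -/
def stDom {m : ℕ} (μ ν : Fin m → ℝ) : Prop :=
  ∀ j : Fin m, ∑ l ∈ Finset.univ.filter (fun l => j ≤ l), μ l ≤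
    ∑ l ∈ Finset.univ.filter (fun l => j ≤ l), ν l

/-- A (row-)stochastic matrix. -/
def IsStochastic {m : ℕ} (P : Matrix (Fin m) (Fin m) ℝ) : Prop :=
  (∀ i j, 0 ≤ P i j) ∧ ∀ i, ∑ j, P i j = 1

/-- The relation `A' ⊴ A`. -/
def tri {m : ℕ} (A' A : Matrix (Fin m) (Fin m) ℝ) : Prop :=
  ∀ i j : Fin m, i ≤ j → stDom (A' i) (A j)


/- If `μ ⪯ ν` have equal total mass, then `∑ μ F ≤ ∑ ν F` for every monotone `F`: peel off the
smallest state, `∑ μ F = F 0 · ∑ μ + ∑_{x ≥ 1} μ x (F x - F 0)`, and induct. For `A' ⊴ A` and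
`P ⊴ Q`, the `j`-th tail sum of row `i` of `A' P` is `∑ μ f` with `μ = A' i` and `f x` the `j`-th
tail sum of `P x`; likewise it is `∑ ν g` for row `i' ≥ i` of `A Q`. As `f x ≤ g y` whenever
`x ≤ y`, the running maximum `F` of `f` is monotone with `f ≤ F ≤ g`, whence
`∑ μ f ≤ ∑ μ F ≤ ∑ ν F ≤ ∑ ν g`. -/

lemma exists_monotone_between {α β : Type*} [Preorder α] [LocallyFiniteOrderBot α]
    [SemilatticeSup β] {f g : α → β} (hfg : ∀ x y, x ≤ y → f x ≤ g y) :
    ∃ F : α → β, Monotone F ∧ f ≤ F ∧ F ≤ g := by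
  refine ⟨fun x => (Iic x).sup' nonempty_Iic f, fun x y hxy => ?_, fun x => ?_, fun x => ?_⟩
  · exact sup'_mono f (Iic_subset_Iic.2 hxy) nonempty_Iic
  · exact le_sup' f (mem_Iic.2 le_rfl)
  · exact sup'_le _ _ fun y hy => hfg y x (mem_Iic.1 hy)

lemma Fin.sum_mul_eq_mul_sum_add_sum_succ {m : ℕ} (μ F : Fin (m + 1) → ℝ) :
    ∑ x, μ x * F x = F 0 * ∑ x, μ x + ∑ x : Fin m, μ x.succ * (F x.succ - F 0) := by
  simp only [Fin.sum_univ_succ, mul_sub, Finset.sum_sub_distrib, ← Finset.sum_mul]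
  ring

lemma tail_sum_vecMul {m : ℕ} (j : Fin m) (ρ : Fin m → ℝ) (R : Matrix (Fin m) (Fin m) ℝ) :
    ∑ l ∈ univ.filter (fun l => j ≤ l), (ρ ᵥ* R) l
      = ∑ x, ρ x * ∑ l ∈ univ.filter (fun l => j ≤ l), R x l := by
  simp only [vecMul, dotProduct, Finset.mul_sum]
  exact Finset.sum_comm

namespace stDom

variable {m : ℕ}

lemma sum_le {μ ν : Fin (m + 1) → ℝ} (h : stDom μ ν) : ∑ x, μ x ≤ ∑ x, ν x := by
  simpa using h 0

lemma tail {μ ν : Fin (m + 1) → ℝ} (h : stDom μ ν) : stDom (Fin.tail μ) (Fin.tail ν) := by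
  have tail_sum : ∀ (ρ : Fin (m + 1) → ℝ) (j : Fin m),
      ∑ l ∈ univ.filter (fun l => j ≤ l), Fin.tail ρ l
        = ∑ l ∈ univ.filter (fun l => j.succ ≤ l), ρ l := by
    intro ρ j
    simp [Finset.sum_filter, Fin.sum_univ_succ, Fin.tail, Fin.succ_ne_zero]
  intro j
  rw [tail_sum, tail_sum]
  exact h j.succ

variable {μ ν : Fin m → ℝ}

lemma sum_mul_le_of_nonneg (h : stDom μ ν) {F : Fin m → ℝ} (hF : Monotone F)
    (hF₀ : ∀ x, 0 ≤ F x) : ∑ x, μ x * F x ≤ ∑ x, ν x * F x := by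
  induction m with
  | zero => simp
  | succ m ih =>
    have hG : Monotone fun x : Fin m => F x.succ - F 0 :=
      fun a b hab => sub_le_sub_right (hF (Fin.succ_le_succ_iff.2 hab)) _
    have hG₀ : ∀ x : Fin m, 0 ≤ F x.succ - F 0 := fun x => sub_nonneg.2 (hF (Fin.zero_le _))
    rw [Fin.sum_mul_eq_mul_sum_add_sum_succ μ, Fin.sum_mul_eq_mul_sum_add_sum_succ ν]
    exact add_le_add (mul_le_mul_of_nonneg_left h.sum_le (hF₀ 0)) (ih h.tail hG hG₀)

lemma sum_mul_le_of_sum_eq (h : stDom μ ν) (hsum : ∑ x, μ x = ∑ x, ν x) {F : Fin m → ℝ}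
    (hF : Monotone F) : ∑ x, μ x * F x ≤ ∑ x, ν x * F x := by
  rcases m with _ | m
  · simp
  have := h.sum_mul_le_of_nonneg (F := fun x => F x - F 0)
    (fun a b hab => sub_le_sub_right (hF hab) _) fun x => sub_nonneg.2 (hF (Fin.zero_le x))
  simp only [mul_sub, Finset.sum_sub_distrib, ← Finset.sum_mul, hsum] at this
  linarith

lemma vecMul (h : stDom μ ν) (hμ : ∀ x, 0 ≤ μ x) (hν : ∀ x, 0 ≤ ν x)
    (hsum : ∑ x, μ x = ∑ x, ν x) {P Q : Matrix (Fin m) (Fin m) ℝ} (hPQ : tri P Q) :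
    stDom (μ ᵥ* P) (ν ᵥ* Q) := by
  intro j
  obtain ⟨F, hF, hfF, hFg⟩ := exists_monotone_between
    (f := fun x => ∑ l ∈ univ.filter (j ≤ ·), P x l)
    (g := fun y => ∑ l ∈ univ.filter (j ≤ ·), Q y l)
    fun x y hxy => hPQ x y hxy j
  rw [tail_sum_vecMul, tail_sum_vecMul]
  calc _ ≤ ∑ x, μ x * F x := sum_le_sum fun x _ => mul_le_mul_of_nonneg_left (hfF x) (hμ x)
    _ ≤ ∑ x, ν x * F x := h.sum_mul_le_of_sum_eq hsum hF
    _ ≤ _ := sum_le_sum fun x _ => mul_le_mul_of_nonneg_left (hFg x) (hν x)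

end stDom

lemma tri_one {m : ℕ} : tri (1 : Matrix (Fin m) (Fin m) ℝ) 1 := by
  intro i i' hii' j
  simp only [one_apply, sum_ite_eq, mem_filter, mem_univ, true_and]
  split_ifs with h₁ h₂
  · exact le_rfl
  · exact absurd (h₁.trans hii') h₂
  all_goals norm_num

lemma tri.mul {m : ℕ} {A' A P Q : Matrix (Fin m) (Fin m) ℝ} (hA' : IsStochastic A')
    (hA : IsStochastic A) (h : tri A' A) (hPQ : tri P Q) : tri (A' * P) (A * Q) := by
  intro i i' hii'
  rw [mul_apply_eq_vecMul, mul_apply_eq_vecMul]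
  exact (h i i' hii').vecMul (hA'.1 i) (hA.1 i') (by rw [hA'.2, hA.2]) hPQ

/-- Lemma 2, second part (De Santis–Spizzichino): the relation `⊴` is
preserved under ordered products of families of stochastic matrices. -/
theorem tri_list_prod
    (k n : ℕ) (A B : Fin n → Matrix (Fin (k + 1)) (Fin (k + 1)) ℝ)
    (hA : ∀ i, IsStochastic (A i)) (hB : ∀ i, IsStochastic (B i))
    (h : ∀ i, tri (A i) (B i)) :
    tri (List.ofFn A).prod (List.ofFn B).prod := by
  induction n with
  | zero => exact tri_one
  | succ n ih =>
    simp only [List.ofFn_succ, List.prod_cons]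
    exact (h 0).mul (hA 0) (hB 0)
      (ih _ _ (fun i => hA i.succ) (fun i => hB i.succ) fun i => h i.succ)
end

section
/- Let P̃ be a stochastic matrix on E_k = {0,...,k} with p̃_{k,k} = 1 whose leading k×k submatrix Q̃ is primitive, and let μ̃ denote the spectral radius of Q̃. Then the large deviation equality lim_{n→∞} (1/n) · ln(1 - (P̃^n)_{0,k}) = ln μ̃ holds (note that 1 - (P̃^n)_{0,k} = ∑_{0≤j≤k-1} (Q̃^n)_{0,j} > 0 for all n, and μ̃ > 0 by primitivity). -/
open Finset Matrix Filter

/-- The leading `k × k` submatrix of a matrix on `{0, …, k}`. -/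
def lead {k : ℕ} (P : Matrix (Fin (k + 1)) (Fin (k + 1)) ℝ) :
    Matrix (Fin k) (Fin k) ℝ :=
  P.submatrix Fin.castSucc Fin.castSucc

/-- The spectral radius of a real matrix: the supremum of the moduli of its
complex eigenvalues. -/
noncomputable def specRad {m : ℕ} (Q : Matrix (Fin m) (Fin m) ℝ) : ℝ :=
  sSup { r : ℝ | ∃ z ∈ spectrum ℂ (Q.map Complex.ofReal), r = ‖z‖ }

/-- `Q` is primitive: some power of `Q` has all entries strictly positive. -/
def IsPrimitive {m : ℕ} (Q : Matrix (Fin m) (Fin m) ℝ) : Prop :=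
  ∃ n : ℕ, 0 < n ∧ ∀ i j, 0 < (Q ^ n) i j

/-!
Since the rows of `Pt ^ n` sum to `1` and the absorbing state is never left,
`1 - (Pt ^ n) 0 (last k)` is the `0`-th row sum of `Q ^ n` for the taboo matrix `Q = lead Pt`.
For nonnegative `Q` this row sum is at most the `ℓ∞`-operator norm `‖Q ^ n‖`; conversely, if
every entry in row `0` of `Q ^ p` is at least `δ > 0`, the row sum of `Q ^ (n + p)` is at least
`δ ‖Q ^ n‖`. So the row sums grow at the exponential rate of `‖Q ^ n‖`, which by Gelfand's
formula is the spectral radius. Iterating the same comparison from `‖Q ^ 0‖ = 1` gives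
`specRad Q ≥ δ ^ (1 / p) > 0`, so `Real.log (specRad Q)` is the genuine limit, not a junk value.
-/

open Topology

section GrowthRate

variable {x y : ℕ → ℝ} {ρ : ℝ}

theorem eventually_pos_of_tendsto_rpow_one_div (hx : ∀ n, 0 ≤ x n) (hρ : 0 < ρ)
    (h : Tendsto (fun n : ℕ => x n ^ (1 / (n : ℝ))) atTop (𝓝 ρ)) :
    ∀ᶠ n in atTop, 0 < x n := by
  filter_upwards [h.eventually (lt_mem_nhds hρ), eventually_ge_atTop 1] with n hxn hn
  refine (hx n).lt_of_ne fun hx0 => ?_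
  rw [← hx0, Real.zero_rpow (by positivity)] at hxn
  exact lt_irrefl _ hxn

theorem tendsto_log_div_of_tendsto_rpow_one_div (hx : ∀ n, 0 ≤ x n) (hρ : 0 < ρ)
    (h : Tendsto (fun n : ℕ => x n ^ (1 / (n : ℝ))) atTop (𝓝 ρ)) :
    Tendsto (fun n : ℕ => 1 / (n : ℝ) * Real.log (x n)) atTop (𝓝 (Real.log ρ)) := by
  refine ((Real.continuousAt_log hρ.ne').tendsto.comp h).congr' ?_
  filter_upwards [eventually_pos_of_tendsto_rpow_one_div hx hρ h] with n hxn
  exact Real.log_rpow hxn _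

theorem le_of_tendsto_rpow_one_div_of_mul_le {δ : ℝ} {m : ℕ} (hm : 0 < m) (hδ : 0 ≤ δ)
    (h : Tendsto (fun n : ℕ => x n ^ (1 / (n : ℝ))) atTop (𝓝 ρ)) (hx₀ : 1 ≤ x 0)
    (hstep : ∀ n, δ * x n ≤ x (m + n)) :
    δ ^ (1 / (m : ℝ)) ≤ ρ := by
  have hpow : ∀ t : ℕ, δ ^ t ≤ x (m * t) := by
    intro t
    induction t with
    | zero => simpa using hx₀
    | succ t ih =>
      calc δ ^ (t + 1) = δ * δ ^ t := pow_succ' δ t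
        _ ≤ δ * x (m * t) := mul_le_mul_of_nonneg_left ih hδ
        _ ≤ x (m * (t + 1)) := by rw [mul_add_one, add_comm]; exact hstep _
  refine ge_of_tendsto (h.comp (tendsto_id.const_mul_atTop' hm)) ?_
  filter_upwards [eventually_ge_atTop 1] with t ht
  calc δ ^ (1 / (m : ℝ)) = (δ ^ t) ^ (1 / ((m * t : ℕ) : ℝ)) := by
        rw [← Real.rpow_natCast, ← Real.rpow_mul hδ]
        congr 1
        push_cast
        field_simp
    _ ≤ x (m * t) ^ (1 / ((m * t : ℕ) : ℝ)) :=
        Real.rpow_le_rpow (pow_nonneg hδ t) (hpow t) (by positivity)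

theorem tendsto_log_div_of_le_of_mul_le_add {δ L : ℝ} {m : ℕ} (hδ : 0 < δ)
    (hx : ∀ᶠ n in atTop, 0 < x n) (hyx : ∀ n, y n ≤ x n) (hxy : ∀ n, δ * x n ≤ y (n + m))
    (h : Tendsto (fun n : ℕ => 1 / (n : ℝ) * Real.log (x n)) atTop (𝓝 L)) :
    Tendsto (fun n : ℕ => 1 / (n : ℝ) * Real.log (y n)) atTop (𝓝 L) := by
  rw [← tendsto_add_atTop_iff_nat m]
  have hδx : ∀ᶠ n in atTop, 0 < δ * x n := hx.mono fun n hxn => mul_pos hδ hxn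
  have hlower : Tendsto
      (fun n : ℕ => (n : ℝ) / (n + m) * (Real.log δ / n + 1 / n * Real.log (x n)))
      atTop (𝓝 L) := by
    simpa using (tendsto_natCast_div_add_atTop (m : ℝ)).mul
      ((tendsto_const_div_atTop_nhds_zero_nat (Real.log δ)).add h)
  refine tendsto_of_tendsto_of_tendsto_of_le_of_le' hlower
    ((tendsto_add_atTop_iff_nat m).2 h) ?_ ?_
  · filter_upwards [hδx, eventually_ge_atTop 1] with n hn hn1
    have hn0 : (n : ℝ) ≠ 0 := by positivity
    calc (n : ℝ) / (n + m) * (Real.log δ / n + 1 / n * Real.log (x n))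
        = 1 / ((n + m : ℕ) : ℝ) * Real.log (δ * x n) := by
          rw [Real.log_mul hδ.ne' (pos_of_mul_pos_right hn hδ.le).ne']
          push_cast
          field_simp
      _ ≤ 1 / ((n + m : ℕ) : ℝ) * Real.log (y (n + m)) := by
          gcongr
          exact hxy n
  · filter_upwards [hδx] with n hn
    gcongr
    exacts [hn.trans_le (hxy n), hyx _]

end GrowthRate

theorem spectrum.pow_norm_pow_one_div_tendsto_nhds_sSup_norm {A : Type*} [NormedRing A]
    [NormedAlgebra ℂ A] [CompleteSpace A] [Nontrivial A] (a : A) :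
    Tendsto (fun n : ℕ => ‖a ^ n‖ ^ (1 / (n : ℝ))) atTop
      (𝓝 (sSup {r : ℝ | ∃ z ∈ spectrum ℂ a, r = ‖z‖})) := by
  obtain ⟨z₀, hz₀, hρ⟩ := spectrum.exists_nnnorm_eq_spectralRadius a
  have hsSup : sSup {r : ℝ | ∃ z ∈ spectrum ℂ a, r = ‖z‖} = ‖z₀‖ := by
    refine IsGreatest.csSup_eq ⟨⟨z₀, hz₀, rfl⟩, ?_⟩
    rintro r ⟨z, hz, rfl⟩
    have : (‖z‖₊ : ENNReal) ≤ ‖z₀‖₊ := hρ ▸ le_iSup₂ (α := ENNReal) z hz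
    exact_mod_cast this
  rw [hsSup]
  have h := (ENNReal.tendsto_toReal (hρ ▸ ENNReal.coe_ne_top)).comp
    (spectrum.pow_norm_pow_one_div_tendsto_nhds_spectralRadius a)
  rw [← hρ] at h
  simpa [Function.comp_def, ENNReal.toReal_ofReal, Real.rpow_nonneg] using h

theorem specRad_fin_zero (Q : Matrix (Fin 0) (Fin 0) ℝ) : specRad Q = 0 := by
  simp [specRad, spectrum.of_subsingleton]

theorem sum_mul_apply {l m n α : Type*} [Fintype m] [Fintype n] [NonUnitalNonAssocSemiring α]
    (M : Matrix l m α) (N : Matrix m n α) (i : l) :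
    ∑ j, (M * N) i j = ∑ k, M i k * ∑ j, N k j := by
  simp only [mul_apply, mul_sum]
  exact sum_comm

section LinftyOpNorm

attribute [local instance] Matrix.linftyOpNormedRing Matrix.linftyOpNormedAlgebra

theorem sum_row_le_linfty_opNorm_map_ofReal {n : Type*} [Fintype n] [DecidableEq n]
    (B : Matrix n n ℝ) (i : n) :
    ∑ j, B i j ≤ ‖B.map Complex.ofReal‖ := by
  rw [linfty_opNorm_def]
  calc ∑ j, B i j ≤ ∑ j, ‖B i j‖ := sum_le_sum fun j _ => Real.le_norm_self _
    _ = ((∑ j, ‖(B.map Complex.ofReal) i j‖₊ : NNReal) : ℝ) := by simp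
    _ ≤ _ := NNReal.coe_le_coe.2 <|
        Finset.le_sup (f := fun i => ∑ j, ‖(B.map Complex.ofReal) i j‖₊) (mem_univ i)

theorem linfty_opNorm_map_ofReal_le {n : Type*} [Fintype n] [DecidableEq n]
    {B : Matrix n n ℝ} (hB : ∀ i j, 0 ≤ B i j) {c : ℝ} (hc : 0 ≤ c) (h : ∀ i, ∑ j, B i j ≤ c) :
    ‖B.map Complex.ofReal‖ ≤ c := by
  rw [linfty_opNorm_def, ← c.coe_toNNReal hc, NNReal.coe_le_coe]
  refine Finset.sup_le fun i _ => ?_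
  rw [← NNReal.coe_le_coe, c.coe_toNNReal hc]
  simpa [abs_of_nonneg (hB i _)] using h i

theorem tendsto_log_div_sum_row_pow {m : ℕ} {Q : Matrix (Fin m) (Fin m) ℝ}
    (hQ : ∀ i j, 0 ≤ Q i j) (hprim : _root_.IsPrimitive Q) (i : Fin m) :
    Tendsto (fun n : ℕ => 1 / (n : ℝ) * Real.log (∑ j, (Q ^ n) i j)) atTop
      (𝓝 (Real.log (specRad Q))) := by
  have : Nonempty (Fin m) := ⟨i⟩
  obtain ⟨p, hp, hpos⟩ := hprim
  obtain ⟨l₀, -, hl₀⟩ := exists_min_image univ (fun l => (Q ^ p) i l) univ_nonempty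
  obtain ⟨δ, hδ, hδle⟩ : ∃ δ > 0, ∀ l, δ ≤ (Q ^ p) i l :=
    ⟨_, hpos i l₀, fun l => hl₀ l (mem_univ l)⟩
  have hQn := pow_apply_nonneg hQ
  set A := Q.map Complex.ofReal
  have hApow (n : ℕ) : A ^ n = (Q ^ n).map Complex.ofReal :=
    (map_pow Complex.ofRealHom.mapMatrix Q n).symm
  have hrow_le (n : ℕ) : ∑ j, (Q ^ n) i j ≤ ‖A ^ n‖ :=
    hApow n ▸ sum_row_le_linfty_opNorm_map_ofReal _ i
  have hcatch (n : ℕ) : δ * ‖A ^ n‖ ≤ ∑ j, (Q ^ (n + p)) i j := by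
    rw [mul_comm, ← le_div_iff₀ hδ, hApow]
    refine linfty_opNorm_map_ofReal_le (hQn n)
      (div_nonneg (sum_nonneg fun j _ => hQn _ i j) hδ.le) fun l => ?_
    rw [le_div_iff₀' hδ, add_comm, pow_add, sum_mul_apply]
    calc δ * ∑ j, (Q ^ n) l j ≤ (Q ^ p) i l * ∑ j, (Q ^ n) l j :=
          mul_le_mul_of_nonneg_right (hδle l) (sum_nonneg fun j _ => hQn n l j)
      _ ≤ ∑ l', (Q ^ p) i l' * ∑ j, (Q ^ n) l' j :=
          single_le_sum (f := fun l' => (Q ^ p) i l' * ∑ j, (Q ^ n) l' j)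
            (fun l' _ => mul_nonneg (hQn p i l') (sum_nonneg fun j _ => hQn n l' j))
            (mem_univ l)
  have hG : Tendsto (fun n : ℕ => ‖A ^ n‖ ^ (1 / (n : ℝ))) atTop (𝓝 (specRad Q)) :=
    spectrum.pow_norm_pow_one_div_tendsto_nhds_sSup_norm A
  have hρ : 0 < specRad Q := by
    refine lt_of_lt_of_le (by positivity) (le_of_tendsto_rpow_one_div_of_mul_le hp
      hδ.le hG (by simp) fun n => ?_)
    rw [add_comm]
    exact (hcatch n).trans (hrow_le _)
  exact tendsto_log_div_of_le_of_mul_le_add hδ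
    (eventually_pos_of_tendsto_rpow_one_div (fun _ => norm_nonneg _) hρ hG) hrow_le hcatch
    (tendsto_log_div_of_tendsto_rpow_one_div (fun _ => norm_nonneg _) hρ hG)

end LinftyOpNorm

section Absorbing

variable {k : ℕ}

theorem IsStochastic.pow {m : ℕ} {P : Matrix (Fin m) (Fin m) ℝ} (hP : IsStochastic P) (n : ℕ) :
    IsStochastic (P ^ n) :=
  mem_rowStochastic_iff_sum.1 (pow_mem (mem_rowStochastic_iff_sum.2 hP) n)

theorem IsStochastic.apply_last_castSucc {P : Matrix (Fin (k + 1)) (Fin (k + 1)) ℝ}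
    (hP : IsStochastic P) (habs : P (Fin.last k) (Fin.last k) = 1) (j : Fin k) :
    P (Fin.last k) j.castSucc = 0 := by
  have hsum := hP.2 (Fin.last k)
  rw [Fin.sum_univ_castSucc, habs, add_eq_right] at hsum
  exact (sum_eq_zero_iff_of_nonneg fun j _ => hP.1 _ _).1 hsum j (mem_univ j)

theorem one_sub_pow_apply_last {P : Matrix (Fin (k + 1)) (Fin (k + 1)) ℝ} (hP : IsStochastic P)
    (n : ℕ) (i : Fin (k + 1)) :
    1 - (P ^ n) i (Fin.last k) = ∑ j : Fin k, (P ^ n) i j.castSucc := by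
  rw [← (hP.pow n).2 i, Fin.sum_univ_castSucc, add_sub_cancel_right]

theorem submatrix_castSucc_pow {R : Type*} [Semiring R]
    {P : Matrix (Fin (k + 1)) (Fin (k + 1)) R}
    (hclosed : ∀ j : Fin k, P (Fin.last k) j.castSucc = 0) (n : ℕ) :
    (P ^ n).submatrix Fin.castSucc Fin.castSucc = P.submatrix Fin.castSucc Fin.castSucc ^ n := by
  induction n with
  | zero => ext i j; simp [one_apply]
  | succ n ih =>
    ext i j
    rw [pow_succ, pow_succ, submatrix_apply, mul_apply, mul_apply, ← ih]
    simp [Fin.sum_univ_castSucc, hclosed]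

end Absorbing

/-- Remark 4 (De Santis–Spizzichino), large deviation equality: for a
stochastic matrix `P̃` with `k` absorbing and primitive taboo matrix `Q̃` of
spectral radius `μ̃`, one has `(1/n) ln(1 - (P̃^n)_{0,k}) → ln μ̃`. -/
theorem large_deviation_hitting_time
    (k : ℕ) (Pt : Matrix (Fin (k + 1)) (Fin (k + 1)) ℝ)
    (hPt : IsStochastic Pt) (habst : Pt (Fin.last k) (Fin.last k) = 1)
    (hprim : _root_.IsPrimitive (lead Pt)) :
    Tendsto (fun n : ℕ => (1 / (n : ℝ)) * Real.log (1 - (Pt ^ n) 0 (Fin.last k)))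
      atTop (nhds (Real.log (specRad (lead Pt)))) := by
  cases k with
  | zero =>
    -- `E_0 = {0}`: the survival probability is `0` and the spectrum of `lead Pt` is empty,
    -- so both sides are `Real.log 0 = 0`.
    have hsurv (n : ℕ) : 1 - (Pt ^ n) 0 (Fin.last 0) = 0 := by
      rw [one_sub_pow_apply_last hPt, Fin.sum_univ_zero]
    simp only [hsurv, specRad_fin_zero, Real.log_zero, mul_zero]
    exact tendsto_const_nhds
  | succ k =>
    have hsurv (n : ℕ) : 1 - (Pt ^ n) 0 (Fin.last (k + 1)) = ∑ j, (lead Pt ^ n) 0 j := by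
      rw [one_sub_pow_apply_last hPt, lead,
        ← submatrix_castSucc_pow (hPt.apply_last_castSucc habst)]
      rfl
    exact (tendsto_log_div_sum_row_pow (Q := lead Pt) (fun i j => hPt.1 _ _) hprim 0).congr
      fun n => by rw [hsurv]
end
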